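/- If a function v holomorphic on the polydisc D_R of polyradius R in ℂ^n satisfies |v(x)| ≤ C/(R-r)^p on D_r for every 0 < r < R, then each partial derivative satisfies |∂_i v(x)| ≤ C·e·(p+1)/(R-r)^(p+1) on D_r for every 0 < r < R. -/

import Mathlib

open Metric

/-- Hörmander Lemma 5.1.3: if `v` is holomorphic on the polydisc `D_R ⊆ ℂⁿ` and satisfies
`|v(x)| ≤ C/(R-r)^p` on `D_r` for every `0 < r < R`, then each partial derivative satisfies
`|∂ᵢ v(x)| ≤ C·e·(p+1)/(R-r)^(p+1)` on `D_r` for every `0 < r < R`. -/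
theorem stmt_0 (n : ℕ) (R C p : ℝ) (hR : 0 < R) (hC : 0 < C) (hp : 0 ≤ p)
    (v : (Fin n → ℂ) → ℂ)
    (hv : DifferentiableOn ℂ v {x | ∀ i, ‖x i‖ < R})
    (hbound : ∀ r : ℝ, 0 < r → r < R → ∀ x : Fin n → ℂ,
      (∀ i, ‖x i‖ < r) → ‖v x‖ ≤ C / (R - r) ^ p) :
    ∀ r : ℝ, 0 < r → r < R → ∀ x : Fin n → ℂ, (∀ i, ‖x i‖ < r) → ∀ i : Fin n,
      ‖fderiv ℂ v x (Pi.single i 1)‖ ≤ C * Real.exp 1 * (p + 1) / (R - r) ^ (p + 1) := by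
  have hopen : IsOpen {x : Fin n → ℂ | ∀ i, ‖x i‖ < R} := by
    have : {x : Fin n → ℂ | ∀ i, ‖x i‖ < R}
        = Set.pi Set.univ (fun _ => Metric.ball (0:ℂ) R) := by
      ext y; simp [Complex.dist_eq]
    rw [this]
    exact isOpen_set_pi Set.finite_univ fun _ _ => isOpen_ball
  intro r hr hrR x hx i
  set d := R - r with hd
  have hdpos : 0 < d := by simp only [hd]; linarith
  have hp1 : (0:ℝ) < p + 1 := by linarith
  set δ := d / (p + 1) with hδ
  have hδpos : 0 < δ := div_pos hdpos hp1
  have hδle : δ ≤ d := div_le_self hdpos.le (by linarith)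
  have hsub : r + δ ≤ R := by simp only [hd] at hδle ⊢; linarith
  set c : Fin n → ℂ := Pi.single i 1 with hc
  set L : ℂ → (Fin n → ℂ) := fun z => x + z • c with hL
  have hmaps : ∀ z ∈ closedBall (0:ℂ) δ, ∀ j, ‖(L z) j‖ < r + δ := by
    intro z hz j
    simp only [mem_closedBall, dist_zero_right] at hz
    simp only [hL, hc, Pi.add_apply, Pi.smul_apply, Pi.single_apply, smul_eq_mul]
    by_cases hji : j = i
    · simp only [hji, eq_self_iff_true, if_true, mul_one]
      calc ‖x i + z‖ ≤ ‖x i‖ + ‖z‖ := norm_add_le _ _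
        _ < r + δ := by have := hx i; linarith
    · simp only [if_neg hji, mul_zero, add_zero]
      have := hx j; linarith
  have hDR : Set.MapsTo L (closedBall (0:ℂ) δ) {x : Fin n → ℂ | ∀ i, ‖x i‖ < R} :=
    fun z hz j => lt_of_lt_of_le (hmaps z hz j) hsub
  -- the uniform bound M on the polydisc of polyradius r + δ
  have hM : ∀ y : Fin n → ℂ, (∀ j, ‖y j‖ < r + δ) → ‖v y‖ ≤ C / (d - δ) ^ p := by
    intro y hy
    rcases eq_or_lt_of_le hp with hp0 | hppos
    · -- p = 0
      have hyR : ∀ j, ‖y j‖ < R := fun j => lt_of_lt_of_le (hy j) hsub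
      set m : NNReal := Finset.univ.sup (fun j => ‖y j‖₊) with hm
      have hqm : ∀ j, ‖y j‖₊ ≤ m := fun j => Finset.le_sup (f := fun j => ‖y j‖₊) (Finset.mem_univ j)
      have hmR : (m : ℝ) < R := by
        have : m < R.toNNReal := by
          rw [hm, Finset.sup_lt_iff (by simpa using Real.toNNReal_pos.2 hR)]
          intro j _
          rw [← NNReal.coe_lt_coe, Real.coe_toNNReal _ hR.le]
          simpa using hyR j
        calc (m : ℝ) < (R.toNNReal : ℝ) := NNReal.coe_lt_coe.2 this
          _ = R := Real.coe_toNNReal _ hR.le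
      set ρ : ℝ := ((m : ℝ) + R) / 2 with hρ
      have hρpos : 0 < ρ := by positivity
      have hρR : ρ < R := by rw [hρ]; linarith
      have hyρ : ∀ j, ‖y j‖ < ρ := by
        intro j
        have h1 : ‖y j‖ ≤ (m : ℝ) := by
          calc ‖y j‖ = (‖y j‖₊ : ℝ) := by
                simp
            _ ≤ (m : ℝ) := NNReal.coe_le_coe.2 (hqm j)
        rw [hρ]; linarith
      have := hbound ρ hρpos hρR y hyρ
      rw [← hp0] at this ⊢
      rwa [Real.rpow_zero] at this ⊢
    · have hδlt : δ < d := by rw [hδ]; exact div_lt_self hdpos (by linarith)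
      have hrδR : r + δ < R := by simp only [hd] at hδlt; linarith
      have := hbound (r + δ) (by linarith) hrδR y hy
      have he : R - (r + δ) = d - δ := by rw [hd]; ring
      rwa [he] at this
  -- differentiability facts
  have hLdiff : Differentiable ℂ L := by
    exact fun z => ((differentiableAt_id.smul_const c).const_add x)
  have hcont : DiffContOnCl ℂ (v ∘ L) (ball (0:ℂ) δ) := by
    apply DifferentiableOn.diffContOnCl
    rw [closure_ball (0:ℂ) hδpos.ne']
    exact hv.comp hLdiff.differentiableOn hDR
  have hsphere : ∀ z ∈ sphere (0:ℂ) δ, ‖(v ∘ L) z‖ ≤ C / (d - δ) ^ p := fun z hz =>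
    hM (L z) (hmaps z (sphere_subset_closedBall hz))
  have hcauchy : ‖deriv (v ∘ L) 0‖ ≤ C / (d - δ) ^ p / δ :=
    Complex.norm_deriv_le_of_forall_mem_sphere_norm_le hδpos hcont hsphere
  -- identify the derivative
  have hxmem : x ∈ {x : Fin n → ℂ | ∀ i, ‖x i‖ < R} :=
    fun j => lt_trans (hx j) hrR
  have hvx : DifferentiableAt ℂ v x := hv.differentiableAt (hopen.mem_nhds hxmem)
  have hL0 : L 0 = x := by simp [hL]
  have hLd : HasDerivAt L c 0 := by
    have h1 : HasDerivAt (fun z : ℂ => z • c) ((1:ℂ) • c) 0 :=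
      (hasDerivAt_id (0:ℂ)).smul_const c
    rw [one_smul] at h1
    exact h1.const_add x
  have hg : HasDerivAt (v ∘ L) (fderiv ℂ v x c) 0 := by
    have h1 := hvx.hasFDerivAt
    rw [← hL0] at h1
    have h2 := h1.comp_hasDerivAt 0 hLd
    rwa [hL0] at h2
  rw [show fderiv ℂ v x c = deriv (v ∘ L) 0 from (hg.deriv).symm]
  refine hcauchy.trans ?_
  -- final arithmetic
  rcases eq_or_lt_of_le hp with hp0 | hppos
  · rw [← hp0, Real.rpow_zero, zero_add, Real.rpow_one]
    have hδd : δ = d := by rw [hδ, ← hp0]; simp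
    rw [hδd, div_one]
    have h1 : (1:ℝ) ≤ Real.exp 1 := by
      have := Real.add_one_le_exp (1:ℝ); linarith
    rw [div_le_div_iff₀ hdpos hdpos]
    nlinarith [mul_pos hC hdpos]
  · set q : ℝ := ((p + 1) / p) ^ p with hq
    have hqpos : 0 < q := Real.rpow_pos_of_pos (by positivity) p
    have hqe : q ≤ Real.exp 1 := by
      have h1 : (p + 1) / p = 1 / p + 1 := by field_simp; ring
      have h2 : 1 / p + 1 ≤ Real.exp (1 / p) := Real.add_one_le_exp _
      calc q ≤ (Real.exp (1 / p)) ^ p := by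
              rw [hq]
              exact Real.rpow_le_rpow (by positivity) (by rw [h1]; exact h2) hp
        _ = Real.exp (1 / p * p) := (Real.exp_mul _ _).symm
        _ = Real.exp 1 := by rw [one_div, inv_mul_cancel₀ hppos.ne']
    have hdd : d - δ = d * (p / (p + 1)) := by rw [hδ]; field_simp; ring
    have hinv : (p / (p + 1)) ^ (p:ℝ) = q⁻¹ := by
      rw [hq, ← Real.inv_rpow (by positivity), inv_div]
    have h1 : (d - δ) ^ p = d ^ p * q⁻¹ := by
      rw [hdd, Real.mul_rpow hdpos.le (by positivity), hinv]
    have h2 : d ^ (p + 1) = d ^ p * d := by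
      rw [Real.rpow_add hdpos, Real.rpow_one]
    have hdp : (0:ℝ) < d ^ p := Real.rpow_pos_of_pos hdpos p
    rw [h1, h2, div_div, div_le_div_iff₀ (by positivity) (by positivity)]
    have hRHSeq : C * Real.exp 1 * (p + 1) * (d ^ p * q⁻¹ * δ)
        = (C * (d ^ p * d)) * (Real.exp 1 * q⁻¹) := by
      rw [hδ]; field_simp
    rw [hRHSeq]
    have hone : (1:ℝ) ≤ Real.exp 1 * q⁻¹ := by
      rw [← div_eq_mul_inv, le_div_iff₀ hqpos, one_mul]
      exact hqe
    exact le_mul_of_one_le_right (by positivity) hone
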